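/- There exists a constant C such that for all x, u ∈ ℝ, ∫_1^∞ |∂K_t(x,u)/∂t| dt ≤ C e^{x²/2}. -/

import Mathlib

open Real MeasureTheory Set

/-- The Mehler kernel of the one-dimensional Ornstein--Uhlenbeck semigroup. -/
noncomputable def mehlerK (t x u : ℝ) : ℝ :=
  Real.exp (x ^ 2 / 2) / Real.sqrt (1 - Real.exp (-2 * t)) *
    Real.exp (-(Real.exp (-t) * u - x) ^ 2 / (2 * (1 - Real.exp (-2 * t))))

/-!
Write `σ = 1 - e^{-2t}` and `z = e^{-t} u - x`. Then `∂ₜK = K · ∂ₜ log K`, and for `t ≥ 1` we have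
`σ ≥ 1/2`, `K ≤ 2 e^{x²/2} e^{-z²/2}` and `z² e^{-z²/2} ≤ 2`, which give
`|∂ₜK| ≤ e^{x²/2} (20 e^{-2t} + 4 |u| e^{-t} |z| e^{-z²/2})`.
The first term is integrable on `(1, ∞)`. Since `t ↦ z` is monotone, the second term is, up to the
sign of `u`, the `t`-derivative of `G(z)`, where `G(w) = sign w · (1 - e^{-w²/2})` is a bounded
primitive of `|w| e^{-w²/2}`; so its integral is at most `2 sup |G| = 2`.
-/

open Filter Topology

lemma abs_coe_sign_le_one {α : Type*} [Ring α] [LinearOrder α] [IsStrictOrderedRing α] (a : α) :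
    |(SignType.sign a : α)| ≤ 1 := by
  rcases lt_trichotomy a 0 with ha | rfl | ha <;> simp [*]

lemma integral_Ioi_le_of_hasDerivAt_of_abs_le {f F : ℝ → ℝ} {a l M : ℝ}
    (hderiv : ∀ t ∈ Ici a, HasDerivAt F (f t) t) (hf : ∀ t ∈ Ioi a, 0 ≤ f t)
    (hF : Tendsto F atTop (𝓝 l)) (hM : ∀ t ∈ Ici a, |F t| ≤ M) :
    ∫ t in Ioi a, f t ≤ 2 * M := by
  rw [integral_Ioi_of_hasDerivAt_of_nonneg' hderiv hf hF]
  have hl : |l| ≤ M := le_of_tendsto hF.abs (eventually_atTop.2 ⟨a, fun t ht => hM t ht⟩)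
  linarith [abs_le.1 hl, abs_le.1 (hM a self_mem_Ici)]

noncomputable def absMulGaussian (w : ℝ) : ℝ := |w| * exp (-w ^ 2 / 2)

noncomputable def absMulGaussianPrimitive (w : ℝ) : ℝ :=
  SignType.sign w * (1 - exp (-w ^ 2 / 2))

lemma absMulGaussian_nonneg (w : ℝ) : 0 ≤ absMulGaussian w := by
  unfold absMulGaussian; positivity

lemma sq_mul_exp_neg_sq_half_le (z : ℝ) : z ^ 2 * exp (-z ^ 2 / 2) ≤ 2 := by
  have h := add_one_le_exp (z ^ 2 / 2)
  rw [neg_div, exp_neg, ← div_eq_mul_inv, div_le_iff₀ (exp_pos _)]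
  linarith

lemma one_sub_exp_neg_sq_half_mem_Icc (w : ℝ) : 1 - exp (-w ^ 2 / 2) ∈ Icc 0 1 := by
  have : exp (-w ^ 2 / 2) ≤ 1 := exp_le_one_iff.2 (by nlinarith [sq_nonneg w])
  constructor <;> linarith [exp_pos (-w ^ 2 / 2)]

lemma abs_absMulGaussianPrimitive_le (w : ℝ) : |absMulGaussianPrimitive w| ≤ 1 := by
  obtain ⟨h0, h1⟩ := one_sub_exp_neg_sq_half_mem_Icc w
  rw [absMulGaussianPrimitive, abs_mul, abs_of_nonneg h0]
  exact mul_le_one₀ (abs_coe_sign_le_one w) h0 h1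

lemma continuousAt_absMulGaussianPrimitive_zero : ContinuousAt absMulGaussianPrimitive 0 := by
  have hlim : Tendsto (fun w => 1 - exp (-w ^ 2 / 2)) (𝓝 0) (𝓝 0) := by
    have : Continuous (fun w : ℝ => 1 - exp (-w ^ 2 / 2)) := by fun_prop
    simpa using this.tendsto 0
  have hzero : absMulGaussianPrimitive 0 = 0 := by simp [absMulGaussianPrimitive]
  rw [ContinuousAt, hzero]
  refine squeeze_zero_norm (fun w => ?_) hlim
  obtain ⟨h0, -⟩ := one_sub_exp_neg_sq_half_mem_Icc w
  rw [Real.norm_eq_abs, absMulGaussianPrimitive, abs_mul, abs_of_nonneg h0]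
  exact mul_le_of_le_one_left h0 (abs_coe_sign_le_one w)

lemma hasDerivAt_absMulGaussianPrimitive (w : ℝ) :
    HasDerivAt absMulGaussianPrimitive (absMulGaussian w) w := by
  refine hasDerivAt_of_hasDerivAt_of_ne' (x := 0) (fun y hy => ?_)
    continuousAt_absMulGaussianPrimitive_zero (by unfold absMulGaussian; fun_prop) w
  have hsign : ∀ᶠ v in 𝓝 y, SignType.sign v = SignType.sign y :=
    (continuousAt_sign_of_ne_zero hy).eventually_mem (mem_nhds_discrete.2 (mem_singleton _))
  have hd : HasDerivAt (fun v => (SignType.sign y : ℝ) * (1 - exp (-v ^ 2 / 2)))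
      (SignType.sign y * -(exp (-y ^ 2 / 2) * (-(2 * y ^ 1 * 1) / 2))) y :=
    ((((hasDerivAt_id' y).pow 2).neg.div_const 2).exp.const_sub 1).const_mul _
  refine (hd.congr_of_eventuallyEq ?_).congr_deriv ?_
  · filter_upwards [hsign] with v hv
    simp [absMulGaussianPrimitive, hv]
  · rw [absMulGaussian, ← sign_mul_self]; ring

section Mehler

variable (x u : ℝ)

lemma hasDerivAt_absMulGaussianPrimitive_comp (t : ℝ) :
    HasDerivAt (fun s => -SignType.sign u * absMulGaussianPrimitive (exp (-s) * u - x))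
      (|u| * exp (-t) * absMulGaussian (exp (-t) * u - x)) t := by
  have h : HasDerivAt (fun s => -SignType.sign u * absMulGaussianPrimitive (exp (-s) * u - x))
      (-SignType.sign u * (absMulGaussian (exp (-t) * u - x) * (exp (-t) * -1 * u))) t :=
    ((hasDerivAt_absMulGaussianPrimitive _).comp t
      (((hasDerivAt_id' t).neg.exp.mul_const u).sub_const x)).const_mul _
  refine h.congr_deriv ?_
  rw [← sign_mul_self u]
  ring

lemma tendsto_absMulGaussianPrimitive_comp :
    Tendsto (fun s => -SignType.sign u * absMulGaussianPrimitive (exp (-s) * u - x)) atTop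
      (𝓝 (-SignType.sign u * absMulGaussianPrimitive (0 * u - x))) := by
  have hP : Continuous absMulGaussianPrimitive :=
    continuous_iff_continuousAt.2 fun w => (hasDerivAt_absMulGaussianPrimitive w).continuousAt
  exact (hP.tendsto _).comp
    ((tendsto_exp_neg_atTop_nhds_zero.mul_const u).sub_const x) |>.const_mul _

lemma integrableOn_absMulGaussian_comp (a : ℝ) :
    IntegrableOn (fun t => |u| * exp (-t) * absMulGaussian (exp (-t) * u - x)) (Ioi a) :=
  integrableOn_Ioi_deriv_of_nonneg' (fun t _ => hasDerivAt_absMulGaussianPrimitive_comp x u t)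
    (fun t _ => by have := absMulGaussian_nonneg (exp (-t) * u - x); positivity)
    (tendsto_absMulGaussianPrimitive_comp x u)

lemma integral_absMulGaussian_comp_le (a : ℝ) :
    ∫ t in Ioi a, |u| * exp (-t) * absMulGaussian (exp (-t) * u - x) ≤ 2 := by
  have hbound (s : ℝ) : |-SignType.sign u * absMulGaussianPrimitive (exp (-s) * u - x)| ≤ 1 := by
    rw [abs_mul, abs_neg]
    exact mul_le_one₀ (abs_coe_sign_le_one u) (abs_nonneg _) (abs_absMulGaussianPrimitive_le _)
  refine (integral_Ioi_le_of_hasDerivAt_of_abs_le (a := a)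
    (fun t _ => hasDerivAt_absMulGaussianPrimitive_comp x u t)
    (fun t _ => by have := absMulGaussian_nonneg (exp (-t) * u - x); positivity)
    (tendsto_absMulGaussianPrimitive_comp x u) (fun s _ => hbound s)).trans_eq (mul_one 2)

noncomputable def mehlerLogDeriv (t : ℝ) : ℝ :=
  ((exp (-t) * u - x) * (exp (-t) * u) - exp (-2 * t)) / (1 - exp (-2 * t)) +
    (exp (-t) * u - x) ^ 2 * exp (-2 * t) / (1 - exp (-2 * t)) ^ 2

lemma hasDerivAt_mehlerK {t : ℝ} (ht : 0 < t) :
    HasDerivAt (fun s => mehlerK s x u) (mehlerK t x u * mehlerLogDeriv x u t) t := by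
  have hσ : 0 < 1 - exp (-2 * t) := sub_pos.2 (exp_lt_one_iff.2 (by linarith))
  have hvar := (((hasDerivAt_id' t).const_mul (-2)).exp).const_sub 1
  have hmean := ((hasDerivAt_id' t).neg.exp.mul_const u).sub_const x
  have h : HasDerivAt (fun s => mehlerK s x u) _ t :=
    ((hasDerivAt_const t (exp (x ^ 2 / 2))).div (hvar.sqrt hσ.ne') (sqrt_pos.2 hσ).ne').mul
      ((hmean.pow 2).neg.div (hvar.const_mul 2) (by positivity)).exp
  refine h.congr_deriv ?_
  simp only [mehlerK, mehlerLogDeriv, Pi.div_apply, Pi.neg_apply, Pi.pow_apply]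
  have hS : √(1 - exp (-2 * t)) ^ 2 = 1 - exp (-2 * t) := sq_sqrt hσ.le
  have hS0 : √(1 - exp (-2 * t)) ≠ 0 := (sqrt_pos.2 hσ).ne'
  generalize √(1 - exp (-2 * t)) = S at hS hS0
  rw [← hS]
  field_simp
  ring

lemma mehlerK_nonneg (t : ℝ) : 0 ≤ mehlerK t x u := by
  unfold mehlerK; positivity

lemma mehlerK_le {t : ℝ} (ht : exp (-2 * t) ≤ 1 / 2) :
    mehlerK t x u ≤ 2 * exp (x ^ 2 / 2) * exp (-(exp (-t) * u - x) ^ 2 / 2) := by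
  have hσ : 1 / 2 ≤ 1 - exp (-2 * t) := by linarith
  have hσ1 : 1 - exp (-2 * t) ≤ 1 := by linarith [exp_pos (-2 * t)]
  have hsqrt : 1 / 2 ≤ √(1 - exp (-2 * t)) := (le_sqrt (by norm_num) (by linarith)).2 (by linarith)
  have hexp : -(exp (-t) * u - x) ^ 2 / (2 * (1 - exp (-2 * t))) ≤
      -(exp (-t) * u - x) ^ 2 / 2 := by
    rw [neg_div, neg_div, neg_le_neg_iff]
    exact div_le_div_of_nonneg_left (sq_nonneg _) (by linarith) (by linarith)
  calc mehlerK t x u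
      ≤ exp (x ^ 2 / 2) / (1 / 2) * exp (-(exp (-t) * u - x) ^ 2 / 2) := by
        unfold mehlerK; gcongr
    _ = 2 * exp (x ^ 2 / 2) * exp (-(exp (-t) * u - x) ^ 2 / 2) := by ring

lemma abs_mehlerLogDeriv_le {t : ℝ} (ht : exp (-2 * t) ≤ 1 / 2) :
    |mehlerLogDeriv x u t| ≤ 2 * (|exp (-t) * u - x| * (|u| * exp (-t)) + exp (-2 * t)) +
      4 * ((exp (-t) * u - x) ^ 2 * exp (-2 * t)) := by
  have hp := exp_pos (-2 * t)
  have hσ : 1 / 2 ≤ 1 - exp (-2 * t) := by linarith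
  have hnum : |(exp (-t) * u - x) * (exp (-t) * u) - exp (-2 * t)| ≤
      |exp (-t) * u - x| * (|u| * exp (-t)) + exp (-2 * t) := by
    refine (abs_sub _ _).trans_eq ?_
    rw [abs_mul, abs_mul, abs_of_pos (exp_pos _), abs_of_pos hp, mul_comm (exp (-t)) |u|]
  calc |mehlerLogDeriv x u t|
      ≤ |(exp (-t) * u - x) * (exp (-t) * u) - exp (-2 * t)| / (1 - exp (-2 * t)) +
          (exp (-t) * u - x) ^ 2 * exp (-2 * t) / (1 - exp (-2 * t)) ^ 2 := by
        refine (abs_add_le _ _).trans_eq ?_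
        rw [abs_div, abs_div, abs_of_pos (by linarith : 0 < 1 - exp (-2 * t)),
          abs_of_nonneg (sq_nonneg (1 - exp (-2 * t))),
          abs_of_nonneg (by positivity : 0 ≤ (exp (-t) * u - x) ^ 2 * exp (-2 * t))]
    _ ≤ (|exp (-t) * u - x| * (|u| * exp (-t)) + exp (-2 * t)) / (1 / 2) +
          (exp (-t) * u - x) ^ 2 * exp (-2 * t) / (1 / 2) ^ 2 := by gcongr
    _ = _ := by ring

lemma exp_neg_two_mul_le_half {t : ℝ} (ht : 1 ≤ t) : exp (-2 * t) ≤ 1 / 2 := by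
  have h2 : 2 + 1 ≤ exp 2 := add_one_le_exp 2
  calc exp (-2 * t) ≤ exp (-2) := exp_le_exp.2 (by linarith)
    _ = (exp 2)⁻¹ := exp_neg 2
    _ ≤ 1 / 2 := by rw [inv_eq_one_div]; gcongr; linarith

lemma abs_deriv_mehlerK_le {t : ℝ} (ht : 1 ≤ t) :
    |deriv (fun s => mehlerK s x u) t| ≤ exp (x ^ 2 / 2) *
      (20 * exp (-2 * t) + 4 * (|u| * exp (-t) * absMulGaussian (exp (-t) * u - x))) := by
  have hp := exp_neg_two_mul_le_half ht
  rw [(hasDerivAt_mehlerK x u (by linarith)).deriv, abs_mul, abs_of_nonneg (mehlerK_nonneg x u t)]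
  set z := exp (-t) * u - x
  have hE : exp (-z ^ 2 / 2) ≤ 1 := exp_le_one_iff.2 (by nlinarith [sq_nonneg z])
  have hzE := sq_mul_exp_neg_sq_half_le z
  calc mehlerK t x u * |mehlerLogDeriv x u t|
      ≤ 2 * exp (x ^ 2 / 2) * exp (-z ^ 2 / 2) *
          (2 * (|z| * (|u| * exp (-t)) + exp (-2 * t)) + 4 * (z ^ 2 * exp (-2 * t))) :=
        mul_le_mul (mehlerK_le x u hp) (abs_mehlerLogDeriv_le x u hp) (abs_nonneg _)
          (by positivity)
    _ = exp (x ^ 2 / 2) * (4 * exp (-2 * t) * exp (-z ^ 2 / 2) +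
          8 * exp (-2 * t) * (z ^ 2 * exp (-z ^ 2 / 2)) +
          4 * (|u| * exp (-t) * absMulGaussian z)) := by rw [absMulGaussian]; ring
    _ ≤ exp (x ^ 2 / 2) * (4 * exp (-2 * t) * 1 + 8 * exp (-2 * t) * 2 +
          4 * (|u| * exp (-t) * absMulGaussian z)) := by gcongr
    _ = _ := by ring

end Mehler

lemma integral_exp_neg_two_mul_Ioi_one_le : ∫ t in Ioi (1 : ℝ), exp (-2 * t) ≤ 1 / 2 := by
  rw [integral_exp_mul_Ioi (by norm_num), neg_div_neg_eq]
  gcongr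
  exact exp_le_one_iff.2 (by norm_num)

theorem mehler_time_deriv_integral_bound :
    ∃ C > (0:ℝ), ∀ x u : ℝ,
      ∫ t in Set.Ioi (1:ℝ), |deriv (fun s => mehlerK s x u) t| ≤
        C * Real.exp (x ^ 2 / 2) := by
  refine ⟨18, by norm_num, fun x u => ?_⟩
  have hexp := integrableOn_exp_mul_Ioi (by norm_num : (-2 : ℝ) < 0) 1
  have hdrift := integrableOn_absMulGaussian_comp x u 1
  calc ∫ t in Ioi 1, |deriv (fun s => mehlerK s x u) t|
      ≤ ∫ t in Ioi 1, exp (x ^ 2 / 2) *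
          (20 * exp (-2 * t) + 4 * (|u| * exp (-t) * absMulGaussian (exp (-t) * u - x))) :=
        integral_mono_of_nonneg (ae_of_all _ fun _ => abs_nonneg _)
          (((hexp.const_mul 20).add (hdrift.const_mul 4)).const_mul _)
          ((ae_restrict_iff' measurableSet_Ioi).2
            (ae_of_all _ fun t ht => abs_deriv_mehlerK_le x u (le_of_lt ht)))
    _ = exp (x ^ 2 / 2) * (20 * (∫ t in Ioi 1, exp (-2 * t)) +
          4 * ∫ t in Ioi 1, |u| * exp (-t) * absMulGaussian (exp (-t) * u - x)) := by
        rw [integral_const_mul, integral_add (hexp.const_mul 20) (hdrift.const_mul 4),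
          integral_const_mul, integral_const_mul]
    _ ≤ exp (x ^ 2 / 2) * (20 * (1 / 2) + 4 * 2) := by
        gcongr
        · exact integral_exp_neg_two_mul_Ioi_one_le
        · exact integral_absMulGaussian_comp_le x u 1
    _ = 18 * exp (x ^ 2 / 2) := by ring
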